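/- arXiv:2205.08719 — 2 statements merged into one kernel-verified Lean document; each statement's English description precedes it below -/
import Mathlib

section
/- A binary function O on [0,1] that is an overlap function (commutative, continuous, non-decreasing, O(x,y)=0 iff xy=0, O(x,y)=1 iff xy=1) and is associative is a continuous positive t-norm; in particular, if O satisfies the exchange principle O(x,O(y,u))=O(y,O(x,u)) for all x,y,u, then 1 is an identity element of O. -/
open unitInterval

instance : Fact ((0:ℝ) ≤ 1) := ⟨zero_le_one⟩
noncomputable instance : CompleteLattice I := Set.Icc.completeLattice

/-- An associative overlap function is a continuous positive t-norm; in particular,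
if an overlap function satisfies the exchange principle (O6), then 1 is its identity. -/
theorem stmt_0 (O : I → I → I)
    (hcomm : ∀ x y, O x y = O y x)
    (hzero : ∀ x y, O x y = 0 ↔ x * y = 0)
    (hone : ∀ x y, O x y = 1 ↔ x * y = 1)
    (hmono : ∀ x, Monotone (O x))
    (hcont : Continuous fun p : I × I => O p.1 p.2) :
    ((∀ x y z, O (O x y) z = O x (O y z)) →
      ((∀ x, O 1 x = x) ∧ (∀ x y, O x y = 0 → x = 0 ∨ y = 0))) ∧
    ((∀ x y u, O x (O y u) = O y (O x u)) → ∀ x, O 1 x = x) := by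
  have h11 : O 1 1 = 1 := (hone 1 1).mpr (mul_one 1)
  have h10 : O 1 0 = 0 := (hzero 1 0).mpr (mul_zero 1)
  have hcont1 : Continuous fun x : I => O 1 x :=
    hcont.comp (continuous_const.prodMk continuous_id)
  -- surjectivity of O 1 ·
  have hsurj : ∀ y : I, ∃ z : I, O 1 z = y := by
    intro y
    set g : ℝ → ℝ := fun t => ((O 1 (Set.projIcc 0 1 zero_le_one t) : I) : ℝ) with hg
    have hgc : Continuous g :=
      continuous_subtype_val.comp (hcont1.comp continuous_projIcc)
    have hg0 : g 0 = 0 := by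
      simp only [hg, Set.projIcc_left]
      have : (⟨0, Set.left_mem_Icc.2 zero_le_one⟩ : I) = 0 := rfl
      rw [this, h10]; rfl
    have hg1 : g 1 = 1 := by
      simp only [hg, Set.projIcc_right]
      have : (⟨1, Set.right_mem_Icc.2 zero_le_one⟩ : I) = 1 := rfl
      rw [this, h11]; rfl
    have hsub := intermediate_value_Icc (zero_le_one (α := ℝ)) hgc.continuousOn
    have hy : (y : ℝ) ∈ Set.Icc (g 0) (g 1) := by
      rw [hg0, hg1]; exact y.2
    obtain ⟨t, _, ht⟩ := hsub hy
    exact ⟨Set.projIcc 0 1 zero_le_one t, Subtype.ext ht⟩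
  have hid : (∀ x y u, O x (O y u) = O y (O x u)) → ∀ x, O 1 x = x := by
    intro hex x
    -- g(g x) = g x where g = O 1 ·
    have key : ∀ x : I, O 1 (O 1 x) = O 1 x := by
      intro x
      have := hex x 1 1
      rw [h11] at this
      calc O 1 (O 1 x) = O 1 (O x 1) := by rw [hcomm x 1]
        _ = O x (O 1 1) := (hex x 1 1).symm
        _ = O x 1 := by rw [h11]
        _ = O 1 x := hcomm x 1
    obtain ⟨z, hz⟩ := hsurj x
    calc O 1 x = O 1 (O 1 z) := by rw [hz]
      _ = O 1 z := key z
      _ = x := hz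
  constructor
  · intro hassoc
    refine ⟨hid ?_, ?_⟩
    · intro x y u
      rw [← hassoc, hcomm x y, hassoc]
    · intro x y h
      have : (x : ℝ) * (y : ℝ) = 0 := by
        have := (hzero x y).mp h
        exact congrArg Subtype.val this
      rcases mul_eq_zero.mp this with h' | h'
      · exact Or.inl (Subtype.ext h')
      · exact Or.inr (Subtype.ext h')
  · exact hid
end

section
/- If G is a grouping function satisfying the exchange principle G(x,G(y,u))=G(y,G(x,u)) for all x,y,u∈[0,1], then 0 is an identity element of G, i.e., G(0,x)=x for all x∈[0,1]. -/
open unitInterval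

/-- If a grouping function satisfies the exchange principle (G6),
then 0 is an identity element of G. -/
theorem stmt_1 (G : I → I → I)
    (hcomm : ∀ x y, G x y = G y x)
    (hzero : ∀ x y, G x y = 0 ↔ x = 0 ∧ y = 0)
    (hone : ∀ x y, G x y = 1 ↔ x = 1 ∨ y = 1)
    (hmono : ∀ x, Monotone (G x))
    (hcont : Continuous fun p : I × I => G p.1 p.2)
    (hexch : ∀ x y u, G x (G y u) = G y (G x u)) :
    ∀ x, G 0 x = x := by
  intro x
  -- g := G 0 is idempotent: G 0 (G 0 y) = G 0 y
  have hidem : ∀ y, G 0 (G 0 y) = G 0 y := by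
    intro y
    have h := hexch 0 y 0
    have h00 : G 0 0 = 0 := (hzero 0 0).mpr ⟨rfl, rfl⟩
    rw [h00] at h
    rwa [hcomm y 0] at h
  have hg0 : G 0 0 = 0 := (hzero 0 0).mpr ⟨rfl, rfl⟩
  have hg1 : G 0 1 = 1 := (hone 0 1).mpr (Or.inr rfl)
  have hgc : Continuous (G 0) :=
    hcont.comp (Continuous.prodMk_right (0 : I))
  -- surjectivity via IVT
  have hx : x ∈ Set.Icc (G 0 0) (G 0 1) := by
    rw [hg0, hg1]
    exact ⟨nonneg' , le_one'⟩
  obtain ⟨s, hs⟩ := intermediate_value_univ (0 : I) 1 hgc hx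
  calc G 0 x = G 0 (G 0 s) := by rw [hs]
    _ = G 0 s := hidem s
    _ = x := hs
end
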